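/- For every ε > 0 there exist a law invariant sublinear risk measure ρ : L^∞ → ℝ satisfying the Lebesgue property and a constant c > 0 such that for all sufficiently large N, sup_{p ∈ [0,1]} E[ |ρ(Ber(p)) − ρ(Ber(p̂_N))| ] ≥ c · N^{−ε}, where for each p the random variables (X_n)_{n≤N} are i.i.d. Bernoulli(p) and p̂_N := (1/N) ∑_{n=1}^N X_n. -/

import Mathlib

open MeasureTheory ProbabilityTheory Filter Real
open scoped ENNReal NNReal

/-!
The risk measure is the mixture `ρ = ∑ₖ (1 - β) βᵏ AVaR_{2⁻ᵏ}` with `β = 2^{-ε}`, each average value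
at risk written in the Rockafellar–Uryasev form `AVaR_u(Y) = inf_a (a + E[(Y - a)⁺] / u)`. The
objective is jointly convex in `(Y, a)`, monotone in `Y`, and equivariant under translations and
positive scalings of `(Y, a)`, which makes every `AVaR_u` a law invariant sublinear risk measure;
it is also `1/u`-Lipschitz in `L¹`, so dominated convergence (for the integrals and then for the
series) gives the Lebesgue property. For `p = 2⁻ᵐ ∈ [1/(4N), 1/(2N)]` all `N` samples vanish with
probability at least `1/2`, and then the estimate is `ρ(Ber 0) = 0`, whereas
`ρ(Ber p) ≥ (1 - β) βᵐ AVaR_p(Ber p) ≥ (1 - β) (4N)^{-ε}`.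
-/

/-- The Bernoulli distribution `Ber(p) = (1-p)δ₀ + pδ₁` as a measure on `ℝ`. -/
noncomputable def Ber (p : ℝ) : Measure ℝ :=
  (Real.toNNReal (1 - p)) • Measure.dirac (0 : ℝ) + (Real.toNNReal p) • Measure.dirac (1 : ℝ)

/-- The empirical success frequency `p̂_N`. -/
noncomputable def pAvg (N : ℕ) (x : Fin N → ℝ) : ℝ := (∑ i, x i) / N

open Set Topology

lemma measureReal_singleton_mul_le_integral {X : Type*} [MeasurableSpace X]
    [MeasurableSingletonClass X] {μ : Measure X} [IsFiniteMeasure μ] {S : Set X} (hS : S.Finite)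
    (hμS : ∀ᵐ x ∂μ, x ∈ S) {F : X → ℝ} (hF : 0 ≤ F) (v : X) :
    μ.real {v} * F v ≤ ∫ x, F x ∂μ := by
  have hFi : Integrable F μ := by
    simpa [IntegrableOn, Measure.restrict_eq_self_of_ae_mem hμS] using
      IntegrableOn.of_finite hS (μ := μ) (f := F)
  rw [← smul_eq_mul, ← integral_singleton]
  exact setIntegral_le_integral hFi (ae_of_all _ hF)

section Bernoulli

variable {p : ℝ}

lemma isProbabilityMeasure_ber (hp : p ∈ Icc (0 : ℝ) 1) : IsProbabilityMeasure (Ber p) := by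
  constructor
  simp [Ber, ← ENNReal.coe_add, ← Real.toNNReal_add (sub_nonneg.2 hp.2) hp.1]

lemma ber_zero : Ber 0 = Measure.dirac 0 := by
  simp [Ber]

lemma ber_singleton_zero (p : ℝ) : Ber p {0} = ENNReal.ofReal (1 - p) := by
  simp [Ber, ENNReal.ofReal]

lemma ae_ber_mem (p : ℝ) : ∀ᵐ x ∂Ber p, x ∈ ({0, 1} : Set ℝ) := by
  simp [Ber, ae_iff]

lemma integral_ber (hp : p ∈ Icc (0 : ℝ) 1) (f : ℝ → ℝ) :
    ∫ x, f x ∂Ber p = (1 - p) * f 0 + p * f 1 := by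
  rw [Ber, integral_add_measure (integrable_dirac (by simp)).smul_measure_nnreal
      (integrable_dirac (by simp)).smul_measure_nnreal,
    integral_smul_nnreal_measure, integral_smul_nnreal_measure, integral_dirac, integral_dirac,
    NNReal.smul_def, NNReal.smul_def, Real.coe_toNNReal _ (sub_nonneg.2 hp.2),
    Real.coe_toNNReal _ hp.1, smul_eq_mul, smul_eq_mul]

lemma one_sub_pow_mul_abs_sub_le_integral (g : ℝ → ℝ) (hp : p ∈ Icc (0 : ℝ) 1)
    (N : ℕ) : (1 - p) ^ N * |g p - g 0|
      ≤ ∫ x, |g p - g (pAvg N x)| ∂(Measure.pi fun _ : Fin N => Ber p) := by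
  have := isProbabilityMeasure_ber hp
  have hS : (univ.pi fun _ : Fin N => ({0, 1} : Set ℝ)).Finite :=
    Finite.pi fun _ => toFinite _
  have hae : ∀ᵐ x ∂(Measure.pi fun _ : Fin N => Ber p), x ∈ univ.pi fun _ => ({0, 1} : Set ℝ) := by
    simp only [mem_univ_pi]
    exact ae_all_iff.2 fun i => Measure.tendsto_eval_ae_ae.eventually (ae_ber_mem p)
  have h0 : (Measure.pi fun _ : Fin N => Ber p).real {0} = (1 - p) ^ N := by
    rw [measureReal_def, ← univ_pi_singleton, Measure.pi_pi]
    simp [ber_singleton_zero, ENNReal.toReal_ofReal (sub_nonneg.2 hp.2)]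
  simpa [h0, pAvg] using
    measureReal_singleton_mul_le_integral hS hae (fun x => abs_nonneg (g p - g (pAvg N x))) 0

end Bernoulli

namespace RiskMeasure

section Objective

variable {Ω : Type*} [MeasurableSpace Ω] {μ : Measure Ω} {u : ℝ} {Y Z : Ω → ℝ}

lemma _root_.MeasureTheory.Integrable.max_sub_const_zero [IsFiniteMeasure μ]
    (hY : Integrable Y μ) (a : ℝ) :
    Integrable (fun ω => max (Y ω - a) 0) μ :=
  (hY.sub (integrable_const a)).pos_part

noncomputable def avarObjective (μ : Measure Ω) (u : ℝ) (Y : Ω → ℝ) (a : ℝ) : ℝ :=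
  a + (∫ ω, max (Y ω - a) 0 ∂μ) / u

lemma avarObjective_add_const (m a : ℝ) :
    avarObjective μ u (fun ω => Y ω + m) (a + m) = avarObjective μ u Y a + m := by
  simp only [avarObjective, add_sub_add_right_eq_sub]
  ring

lemma avarObjective_const_mul {t : ℝ} (ht : 0 ≤ t) (a : ℝ) :
    avarObjective μ u (fun ω => t * Y ω) (t * a) = t * avarObjective μ u Y a := by
  have h : ∀ ω, max (t * Y ω - t * a) 0 = t * max (Y ω - a) 0 := fun ω => by
    rw [← mul_sub, mul_max_of_nonneg _ _ ht, mul_zero]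
  simp only [avarObjective, h, integral_const_mul]
  ring

lemma avarObjective_mono [IsFiniteMeasure μ] (hY : Integrable Y μ) (hZ : Integrable Z μ)
    (hYZ : Y ≤ᵐ[μ] Z) (hu : 0 ≤ u) (a : ℝ) :
    avarObjective μ u Y a ≤ avarObjective μ u Z a := by
  have : ∫ ω, max (Y ω - a) 0 ∂μ ≤ ∫ ω, max (Z ω - a) 0 ∂μ := by
    refine integral_mono_ae (hY.max_sub_const_zero a) (hZ.max_sub_const_zero a) ?_
    filter_upwards [hYZ] with ω hω
    gcongr
  unfold avarObjective
  gcongr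

lemma avarObjective_convex [IsFiniteMeasure μ] (hY : Integrable Y μ) (hZ : Integrable Z μ)
    (hu : 0 ≤ u) {t : ℝ} (ht : t ∈ Icc (0 : ℝ) 1) (a b : ℝ) :
    avarObjective μ u (fun ω => t * Y ω + (1 - t) * Z ω) (t * a + (1 - t) * b)
      ≤ t * avarObjective μ u Y a + (1 - t) * avarObjective μ u Z b := by
  obtain ⟨ht0, ht1⟩ := ht
  have hmix := (hY.const_mul t).add (hZ.const_mul (1 - t))
  have : ∫ ω, max (t * Y ω + (1 - t) * Z ω - (t * a + (1 - t) * b)) 0 ∂μ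
      ≤ t * ∫ ω, max (Y ω - a) 0 ∂μ + (1 - t) * ∫ ω, max (Z ω - b) 0 ∂μ := by
    rw [← integral_const_mul, ← integral_const_mul, ← integral_add
      ((hY.max_sub_const_zero a).const_mul t) ((hZ.max_sub_const_zero b).const_mul (1 - t))]
    refine integral_mono (hmix.max_sub_const_zero _)
      (((hY.max_sub_const_zero a).const_mul t).add ((hZ.max_sub_const_zero b).const_mul _))
      fun ω => max_le ?_ (by positivity)
    nlinarith [le_max_left (Y ω - a) 0, le_max_left (Z ω - b) 0]
  unfold avarObjective
  calc _ ≤ t * a + (1 - t) * b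
        + (t * ∫ ω, max (Y ω - a) 0 ∂μ + (1 - t) * ∫ ω, max (Z ω - b) 0 ∂μ) / u := by gcongr
    _ = _ := by ring

lemma avarObjective_le_add_integral_abs_sub [IsFiniteMeasure μ] (hY : Integrable Y μ)
    (hZ : Integrable Z μ) (hu : 0 ≤ u) (a : ℝ) :
    avarObjective μ u Y a ≤ avarObjective μ u Z a + (∫ ω, |Y ω - Z ω| ∂μ) / u := by
  have hd : Integrable (fun ω => |Y ω - Z ω|) μ := (hY.sub hZ).abs
  have : ∫ ω, max (Y ω - a) 0 ∂μ ≤ ∫ ω, max (Z ω - a) 0 ∂μ + ∫ ω, |Y ω - Z ω| ∂μ := by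
    rw [← integral_add (hZ.max_sub_const_zero a) hd]
    refine integral_mono (hY.max_sub_const_zero a)
      ((hZ.max_sub_const_zero a).add hd) fun ω => max_le ?_ (by positivity)
    linarith [le_max_left (Z ω - a) 0, le_abs_self (Y ω - Z ω)]
  unfold avarObjective
  rw [add_assoc, ← add_div]
  gcongr

end Objective

section AVaR

variable {Ω : Type*} [MeasurableSpace Ω] {μ : Measure Ω} {u C : ℝ} {Y Z : Ω → ℝ}

/-- A real `⨅` that is unbounded below is `0`; `integral_le_avarObjective` excludes this for
integrable `Y` and `u ∈ (0, 1]`. -/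
noncomputable def avar (μ : Measure Ω) (u : ℝ) (Y : Ω → ℝ) : ℝ :=
  ⨅ a, avarObjective μ u Y a

lemma avar_map {Ω' : Type*} [MeasurableSpace Ω'] {P : Measure Ω'} {Y : Ω' → ℝ}
    (hY : AEMeasurable Y P) : avar (P.map Y) u id = avar P u Y := by
  simp only [avar, avarObjective, id]
  congr! 4 with a
  exact integral_map hY (by fun_prop : Measurable fun x : ℝ => max (x - a) 0).aestronglyMeasurable

variable [IsProbabilityMeasure μ]

lemma integral_le_avarObjective (hY : Integrable Y μ) (hu : u ∈ Ioc (0 : ℝ) 1) (a : ℝ) :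
    ∫ ω, Y ω ∂μ ≤ avarObjective μ u Y a := by
  have h1 : ∫ ω, (Y ω - a) ∂μ ≤ ∫ ω, max (Y ω - a) 0 ∂μ :=
    integral_mono (hY.sub (integrable_const a)) (hY.max_sub_const_zero a)
      fun ω => le_max_left (Y ω - a) 0
  simp only [integral_sub hY (integrable_const a), integral_const, probReal_univ, one_smul] at h1
  have h2 := le_div_self (integral_nonneg (μ := μ) fun ω => le_max_right (Y ω - a) 0) hu.1 hu.2
  unfold avarObjective
  linarith

lemma avar_le_avarObjective (hY : Integrable Y μ) (hu : u ∈ Ioc (0 : ℝ) 1) (a : ℝ) :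
    avar μ u Y ≤ avarObjective μ u Y a :=
  ciInf_le ⟨_, forall_mem_range.2 (integral_le_avarObjective hY hu)⟩ a

lemma integral_le_avar (hY : Integrable Y μ) (hu : u ∈ Ioc (0 : ℝ) 1) :
    ∫ ω, Y ω ∂μ ≤ avar μ u Y :=
  le_ciInf (integral_le_avarObjective hY hu)

lemma avar_le_of_ae_le (hY : Integrable Y μ) (hu : u ∈ Ioc (0 : ℝ) 1)
    (hC : ∀ᵐ ω ∂μ, Y ω ≤ C) : avar μ u Y ≤ C := by
  refine (avar_le_avarObjective hY hu C).trans_eq ?_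
  have : ∫ ω, max (Y ω - C) 0 ∂μ = 0 :=
    integral_eq_zero_of_ae (hC.mono fun ω h => max_eq_right (sub_nonpos.2 h))
  simp [avarObjective, this]

lemma avar_of_ae_eq_const {c : ℝ} (hu : u ∈ Ioc (0 : ℝ) 1) (h : ∀ᵐ ω ∂μ, Y ω = c) :
    avar μ u Y = c := by
  have hY : Integrable Y μ := (integrable_const c).congr (h.mono fun _ => Eq.symm)
  refine le_antisymm (avar_le_of_ae_le hY hu (h.mono fun _ => le_of_eq)) ?_
  simpa [integral_congr_ae h] using integral_le_avar hY hu

lemma abs_avar_le (hY : Integrable Y μ) (hu : u ∈ Ioc (0 : ℝ) 1)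
    (hC : ∀ᵐ ω ∂μ, |Y ω| ≤ C) : |avar μ u Y| ≤ C := by
  have hint : |∫ ω, Y ω ∂μ| ≤ C := by
    simpa using norm_integral_le_of_norm_le_const (f := Y) hC
  exact abs_le.2 ⟨(neg_le_of_abs_le hint).trans (integral_le_avar hY hu),
    avar_le_of_ae_le hY hu (hC.mono fun _ h => (abs_le.1 h).2)⟩

lemma avar_add_const (hY : Integrable Y μ) (hu : u ∈ Ioc (0 : ℝ) 1) (m : ℝ) :
    avar μ u (fun ω => Y ω + m) = avar μ u Y + m := by
  have key : ∀ {Y : Ω → ℝ}, Integrable Y μ → ∀ m, avar μ u (fun ω => Y ω + m) ≤ avar μ u Y + m :=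
    fun {Y} hY m => sub_le_iff_le_add.1 <| le_ciInf fun a => sub_le_iff_le_add.2 <|
      (avar_le_avarObjective (hY.add (integrable_const m)) hu (a + m)).trans_eq
        (avarObjective_add_const m a)
  refine le_antisymm (key hY m) ?_
  have := key (Y := fun ω => Y ω + m) (hY.add (integrable_const m)) (-m)
  simp only [add_neg_cancel_right] at this
  linarith

lemma avar_const_mul (hY : Integrable Y μ) (hu : u ∈ Ioc (0 : ℝ) 1) {t : ℝ} (ht : 0 < t) :
    avar μ u (fun ω => t * Y ω) = t * avar μ u Y := by
  have key : ∀ {Y : Ω → ℝ}, Integrable Y μ → ∀ {t : ℝ}, 0 < t →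
      avar μ u (fun ω => t * Y ω) ≤ t * avar μ u Y := fun {Y} hY {t} ht => by
    unfold avar
    rw [Real.mul_iInf_of_nonneg ht.le]
    exact le_ciInf fun a => (avar_le_avarObjective (hY.const_mul t) hu (t * a)).trans_eq
      (avarObjective_const_mul ht.le a)
  refine le_antisymm (key hY ht) ?_
  have := key (Y := fun ω => t * Y ω) (hY.const_mul t) (inv_pos.2 ht)
  simp only [inv_mul_cancel_left₀ ht.ne'] at this
  exact (le_inv_mul_iff₀ ht).1 this

lemma avar_mono (hY : Integrable Y μ) (hZ : Integrable Z μ) (hYZ : Y ≤ᵐ[μ] Z)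
    (hu : u ∈ Ioc (0 : ℝ) 1) : avar μ u Y ≤ avar μ u Z :=
  le_ciInf fun a => (avar_le_avarObjective hY hu a).trans (avarObjective_mono hY hZ hYZ hu.1.le a)

lemma avar_convex (hY : Integrable Y μ) (hZ : Integrable Z μ) (hu : u ∈ Ioc (0 : ℝ) 1)
    {t : ℝ} (ht : t ∈ Icc (0 : ℝ) 1) :
    avar μ u (fun ω => t * Y ω + (1 - t) * Z ω) ≤ t * avar μ u Y + (1 - t) * avar μ u Z := by
  have hmix : Integrable (fun ω => t * Y ω + (1 - t) * Z ω) μ :=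
    (hY.const_mul t).add (hZ.const_mul (1 - t))
  unfold avar
  rw [Real.mul_iInf_of_nonneg ht.1, Real.mul_iInf_of_nonneg (sub_nonneg.2 ht.2)]
  exact le_ciInf_add_ciInf fun a b =>
    (avar_le_avarObjective hmix hu _).trans (avarObjective_convex hY hZ hu.1.le ht a b)

lemma avar_le_add_integral_abs_sub (hY : Integrable Y μ) (hZ : Integrable Z μ)
    (hu : u ∈ Ioc (0 : ℝ) 1) :
    avar μ u Y ≤ avar μ u Z + (∫ ω, |Y ω - Z ω| ∂μ) / u :=
  sub_le_iff_le_add.1 <| le_ciInf fun a => sub_le_iff_le_add.2 <|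
    (avar_le_avarObjective hY hu a).trans (avarObjective_le_add_integral_abs_sub hY hZ hu.1.le a)

lemma abs_avar_sub_le (hY : Integrable Y μ) (hZ : Integrable Z μ) (hu : u ∈ Ioc (0 : ℝ) 1) :
    |avar μ u Y - avar μ u Z| ≤ (∫ ω, |Y ω - Z ω| ∂μ) / u := by
  have hsymm : ∫ ω, |Z ω - Y ω| ∂μ = ∫ ω, |Y ω - Z ω| ∂μ := by
    congr 1 with ω
    exact abs_sub_comm _ _
  have h₁ := avar_le_add_integral_abs_sub hY hZ hu
  have h₂ := avar_le_add_integral_abs_sub hZ hY hu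
  rw [hsymm] at h₂
  exact abs_sub_le_iff.2 ⟨by linarith, by linarith⟩

lemma tendsto_avar_of_ae_tendsto {Yn : ℕ → Ω → ℝ} (hu : u ∈ Ioc (0 : ℝ) 1)
    (hYn : ∀ n, AEStronglyMeasurable (Yn n) μ) (hC : ∀ n, ∀ᵐ ω ∂μ, |Yn n ω| ≤ C)
    (hlim : ∀ᵐ ω ∂μ, Tendsto (fun n => Yn n ω) atTop (𝓝 (Y ω))) :
    Tendsto (fun n => avar μ u (Yn n)) atTop (𝓝 (avar μ u Y)) := by
  have hCY : ∀ᵐ ω ∂μ, |Y ω| ≤ C := by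
    filter_upwards [hlim, ae_all_iff.2 hC] with ω hω hb
    exact le_of_tendsto' hω.abs hb
  have hYm : AEStronglyMeasurable Y μ := aestronglyMeasurable_of_tendsto_ae atTop hYn hlim
  have hY : Integrable Y μ := .of_bound hYm C hCY
  have hL1 : Tendsto (fun n => ∫ ω, |Yn n ω - Y ω| ∂μ) atTop (𝓝 0) := by
    have hbound : ∀ n, ∀ᵐ ω ∂μ, ‖|Yn n ω - Y ω|‖ ≤ C + C := fun n => by
      filter_upwards [hC n, hCY] with ω h₁ h₂
      rw [Real.norm_eq_abs, abs_abs]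
      exact (abs_sub _ _).trans (add_le_add h₁ h₂)
    have hlim' : ∀ᵐ ω ∂μ, Tendsto (fun n => |Yn n ω - Y ω|) atTop (𝓝 0) := by
      filter_upwards [hlim] with ω hω
      simpa using (hω.sub_const (Y ω)).abs
    simpa using tendsto_integral_filter_of_norm_le_const
      (Eventually.of_forall fun n => ((hYn n).sub hYm).norm) ⟨C + C, .of_forall hbound⟩ hlim'
  rw [tendsto_iff_norm_sub_tendsto_zero]
  refine squeeze_zero (fun n => norm_nonneg _)
    (fun n => abs_avar_sub_le (.of_bound (hYn n) C (hC n)) hY hu) ?_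
  simpa using hL1.div_const u

end AVaR

section Mixture

variable {Ω : Type*} [MeasurableSpace Ω] {μ : Measure Ω} {w u : ℕ → ℝ} {C D : ℝ}
  {Y Z : Ω → ℝ}

noncomputable def mixedAVaR (w u : ℕ → ℝ) (μ : Measure Ω) (Y : Ω → ℝ) : ℝ :=
  ∑' k, w k * avar μ (u k) Y

lemma mixedAVaR_map {Ω' : Type*} [MeasurableSpace Ω'] {P : Measure Ω'} {Y : Ω' → ℝ}
    (hY : AEMeasurable Y P) : mixedAVaR w u (P.map Y) id = mixedAVaR w u P Y := by
  simp only [mixedAVaR, avar_map hY]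

variable [IsProbabilityMeasure μ]

lemma summable_mul_avar (hw0 : ∀ k, 0 ≤ w k) (hw : Summable w) (hu : ∀ k, u k ∈ Ioc (0 : ℝ) 1)
    (hY : AEStronglyMeasurable Y μ) (hC : ∀ᵐ ω ∂μ, |Y ω| ≤ C) :
    Summable fun k => w k * avar μ (u k) Y :=
  (hw.mul_right C).of_norm_bounded fun k => by
    rw [norm_mul, Real.norm_of_nonneg (hw0 k)]
    exact mul_le_mul_of_nonneg_left (abs_avar_le (.of_bound hY C hC) (hu k) hC) (hw0 k)

lemma mixedAVaR_of_ae_eq_const {c : ℝ} (hw : HasSum w 1) (hu : ∀ k, u k ∈ Ioc (0 : ℝ) 1)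
    (h : ∀ᵐ ω ∂μ, Y ω = c) : mixedAVaR w u μ Y = c := by
  simp only [mixedAVaR, avar_of_ae_eq_const (hu _) h, tsum_mul_right, hw.tsum_eq, one_mul]

lemma mixedAVaR_add_const (hw0 : ∀ k, 0 ≤ w k) (hw : HasSum w 1)
    (hu : ∀ k, u k ∈ Ioc (0 : ℝ) 1) (hY : AEStronglyMeasurable Y μ) (hC : ∀ᵐ ω ∂μ, |Y ω| ≤ C)
    (m : ℝ) : mixedAVaR w u μ (fun ω => Y ω + m) = mixedAVaR w u μ Y + m := by
  simp only [mixedAVaR, avar_add_const (.of_bound hY C hC) (hu _), mul_add]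
  rw [(summable_mul_avar hw0 hw.summable hu hY hC).tsum_add (hw.summable.mul_right m),
    tsum_mul_right, hw.tsum_eq, one_mul]

lemma mixedAVaR_const_mul (hu : ∀ k, u k ∈ Ioc (0 : ℝ) 1) (hY : Integrable Y μ) {t : ℝ}
    (ht : 0 ≤ t) : mixedAVaR w u μ (fun ω => t * Y ω) = t * mixedAVaR w u μ Y := by
  rcases ht.eq_or_lt with rfl | ht
  · have h0 : ∀ k, avar μ (u k) (fun _ => 0) = 0 := fun k =>
      avar_of_ae_eq_const (hu k) (ae_of_all μ fun _ => rfl)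
    simp [mixedAVaR, h0]
  · simp only [mixedAVaR, avar_const_mul hY (hu _) ht, mul_left_comm _ t, tsum_mul_left]

lemma mixedAVaR_mono (hw0 : ∀ k, 0 ≤ w k) (hw : Summable w) (hu : ∀ k, u k ∈ Ioc (0 : ℝ) 1)
    (hY : AEStronglyMeasurable Y μ) (hZ : AEStronglyMeasurable Z μ) (hC : ∀ᵐ ω ∂μ, |Y ω| ≤ C)
    (hD : ∀ᵐ ω ∂μ, |Z ω| ≤ D) (hYZ : Y ≤ᵐ[μ] Z) : mixedAVaR w u μ Y ≤ mixedAVaR w u μ Z :=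
  Summable.tsum_le_tsum
    (fun k => mul_le_mul_of_nonneg_left
      (avar_mono (.of_bound hY C hC) (.of_bound hZ D hD) hYZ (hu k)) (hw0 k))
    (summable_mul_avar hw0 hw hu hY hC) (summable_mul_avar hw0 hw hu hZ hD)

lemma mixedAVaR_convex (hw0 : ∀ k, 0 ≤ w k) (hw : Summable w) (hu : ∀ k, u k ∈ Ioc (0 : ℝ) 1)
    (hY : AEStronglyMeasurable Y μ) (hZ : AEStronglyMeasurable Z μ) (hC : ∀ᵐ ω ∂μ, |Y ω| ≤ C)
    (hD : ∀ᵐ ω ∂μ, |Z ω| ≤ D) {t : ℝ} (ht : t ∈ Icc (0 : ℝ) 1) :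
    mixedAVaR w u μ (fun ω => t * Y ω + (1 - t) * Z ω)
      ≤ t * mixedAVaR w u μ Y + (1 - t) * mixedAVaR w u μ Z := by
  have hmix : ∀ᵐ ω ∂μ, |t * Y ω + (1 - t) * Z ω| ≤ C + D := by
    filter_upwards [hC, hD] with ω h₁ h₂
    rw [abs_le] at h₁ h₂ ⊢
    obtain ⟨ht0, ht1⟩ := ht
    constructor <;> nlinarith
  have hY' := summable_mul_avar hw0 hw hu hY hC
  have hZ' := summable_mul_avar hw0 hw hu hZ hD
  unfold mixedAVaR
  rw [← tsum_mul_left, ← tsum_mul_left, ← (hY'.mul_left t).tsum_add (hZ'.mul_left (1 - t))]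
  refine Summable.tsum_le_tsum (fun k => ?_)
    (summable_mul_avar hw0 hw hu (by fun_prop) hmix) ((hY'.mul_left t).add (hZ'.mul_left _))
  have := mul_le_mul_of_nonneg_left
    (avar_convex (.of_bound hY C hC) (.of_bound hZ D hD) (hu k) ht) (hw0 k)
  linarith

lemma tendsto_mixedAVaR_of_ae_tendsto (hw0 : ∀ k, 0 ≤ w k) (hw : Summable w)
    (hu : ∀ k, u k ∈ Ioc (0 : ℝ) 1) {Yn : ℕ → Ω → ℝ} (hYn : ∀ n, AEStronglyMeasurable (Yn n) μ)
    (hC : ∀ n, ∀ᵐ ω ∂μ, |Yn n ω| ≤ C)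
    (hlim : ∀ᵐ ω ∂μ, Tendsto (fun n => Yn n ω) atTop (𝓝 (Y ω))) :
    Tendsto (fun n => mixedAVaR w u μ (Yn n)) atTop (𝓝 (mixedAVaR w u μ Y)) :=
  tendsto_tsum_of_dominated_convergence (hw.mul_right C)
    (fun k => (tendsto_avar_of_ae_tendsto (hu k) hYn hC hlim).const_mul (w k))
    (Eventually.of_forall fun n k => by
      rw [norm_mul, Real.norm_of_nonneg (hw0 k)]
      exact mul_le_mul_of_nonneg_left
        (abs_avar_le (.of_bound (hYn n) C (hC n)) (hu k) (hC n)) (hw0 k))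

end Mixture

section Bernoulli

variable {w u : ℕ → ℝ} {p : ℝ}

lemma one_le_avar_ber (hp : p ∈ Ioc (0 : ℝ) 1) : 1 ≤ avar (Ber p) p id := by
  refine le_ciInf fun a => ?_
  have h₀ : 0 ≤ (1 - p) * max (0 - a) 0 := mul_nonneg (sub_nonneg.2 hp.2) (le_max_right _ _)
  have h₁ : max (1 - a) 0 ≤ ((1 - p) * max (0 - a) 0 + p * max (1 - a) 0) / p := by
    rw [le_div_iff₀ hp.1]
    linarith
  rw [avarObjective, integral_ber (Ioc_subset_Icc_self hp)]
  simp only [id]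
  linarith [le_max_left (1 - a) 0]

lemma mixedAVaR_ber_zero (hw : HasSum w 1) (hu : ∀ k, u k ∈ Ioc (0 : ℝ) 1) :
    mixedAVaR w u (Ber 0) id = 0 := by
  rw [ber_zero]
  exact mixedAVaR_of_ae_eq_const hw hu ((ae_dirac_iff (measurableSet_singleton 0)).2 rfl)

lemma le_mixedAVaR_ber (hw0 : ∀ k, 0 ≤ w k) (hw : Summable w) (hu : ∀ k, u k ∈ Ioc (0 : ℝ) 1)
    (k : ℕ) : w k ≤ mixedAVaR w u (Ber (u k)) id := by
  have hp := Ioc_subset_Icc_self (hu k)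
  have := isProbabilityMeasure_ber hp
  have hbound : ∀ᵐ x ∂Ber (u k), |id x| ≤ 1 :=
    (ae_ber_mem _).mono fun x hx => by rcases hx with rfl | rfl <;> simp
  have hint : Integrable id (Ber (u k)) := .of_bound measurable_id.aestronglyMeasurable 1 hbound
  have hmean : 0 ≤ ∫ x, id x ∂Ber (u k) := by simpa [integral_ber hp] using hp.1
  calc w k = w k * 1 := (mul_one _).symm
    _ ≤ w k * avar (Ber (u k)) (u k) id :=
        mul_le_mul_of_nonneg_left (one_le_avar_ber (hu k)) (hw0 k)
    _ ≤ _ := (summable_mul_avar hw0 hw hu measurable_id.aestronglyMeasurable hbound).le_tsum k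
        fun j _ => mul_nonneg (hw0 j) (hmean.trans (integral_le_avar hint (hu j)))

end Bernoulli


section Dyadic

noncomputable def geomWeight (β : ℝ) (k : ℕ) : ℝ := (1 - β) * β ^ k

noncomputable def dyadicLevel (k : ℕ) : ℝ := ((2 : ℝ) ^ k)⁻¹

variable {β : ℝ}

lemma geomWeight_nonneg (hβ : β ∈ Icc (0 : ℝ) 1) (k : ℕ) : 0 ≤ geomWeight β k :=
  mul_nonneg (sub_nonneg.2 hβ.2) (pow_nonneg hβ.1 k)

lemma hasSum_geomWeight (hβ : β ∈ Ico (0 : ℝ) 1) : HasSum (geomWeight β) 1 := by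
  have := (hasSum_geometric_of_lt_one hβ.1 hβ.2).mul_left (1 - β)
  rwa [mul_inv_cancel₀ (sub_ne_zero.2 hβ.2.ne')] at this

lemma dyadicLevel_mem_Ioc (k : ℕ) : dyadicLevel k ∈ Ioc (0 : ℝ) 1 :=
  ⟨inv_pos.2 (pow_pos two_pos k), inv_le_one_of_one_le₀ (one_le_pow₀ one_le_two)⟩

lemma exists_two_pow_between {N : ℕ} (hN : N ≠ 0) : ∃ m : ℕ, 2 * N ≤ 2 ^ m ∧ 2 ^ m ≤ 4 * N := by
  refine ⟨Nat.log 2 N + 2, ?_⟩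
  have h₁ := Nat.pow_log_le_self 2 hN
  have h₂ := Nat.lt_pow_succ_log_self one_lt_two N
  rw [pow_succ] at h₂
  rw [pow_add]
  generalize 2 ^ Nat.log 2 N = P at *
  omega

lemma two_rpow_neg_mem_Ico {ε : ℝ} (hε : 0 < ε) : (2 : ℝ) ^ (-ε) ∈ Ico (0 : ℝ) 1 :=
  ⟨by positivity, rpow_lt_one_of_one_lt_of_neg one_lt_two (neg_neg_of_pos hε)⟩

lemma mul_rpow_neg_le_geomWeight {ε x : ℝ} (hε : 0 < ε) {m : ℕ} (hx : 2 ^ m ≤ x) :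
    (1 - 2 ^ (-ε)) * x ^ (-ε) ≤ geomWeight (2 ^ (-ε)) m := by
  rw [geomWeight, rpow_pow_comm zero_le_two]
  exact mul_le_mul_of_nonneg_left
    (rpow_le_rpow_of_nonpos (by positivity) hx (neg_nonpos.2 hε.le))
    (sub_nonneg.2 (two_rpow_neg_mem_Ico hε).2.le)

lemma half_le_one_sub_dyadicLevel_pow {m N : ℕ} (h : 2 * N ≤ 2 ^ m) :
    1 / 2 ≤ (1 - dyadicLevel m) ^ N := by
  have hNp : (N : ℝ) * dyadicLevel m ≤ 1 / 2 := by
    rw [dyadicLevel, ← div_eq_mul_inv, div_le_iff₀ (by positivity)]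
    have : (2 * N : ℝ) ≤ 2 ^ m := by exact_mod_cast h
    linarith
  have := one_add_mul_le_pow (a := -dyadicLevel m) (by linarith [(dyadicLevel_mem_Ioc m).2]) N
  rw [← sub_eq_add_neg] at this
  linarith

theorem exists_mul_rpow_le_estimation_error {ε : ℝ} (hε : 0 < ε) :
    ∃ c > 0, ∃ N₀ : ℕ, ∀ N : ℕ, N₀ ≤ N → ∃ p ∈ Icc (0 : ℝ) 1,
      c * (N : ℝ) ^ (-ε) ≤ ∫ x, |mixedAVaR (geomWeight (2 ^ (-ε))) dyadicLevel (Ber p) id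
        - mixedAVaR (geomWeight (2 ^ (-ε))) dyadicLevel (Ber (pAvg N x)) id|
          ∂(Measure.pi fun _ : Fin N => Ber p) := by
  have hβ := two_rpow_neg_mem_Ico hε
  have hw := hasSum_geomWeight hβ
  refine ⟨(1 - 2 ^ (-ε)) * 4 ^ (-ε) / 2, by have := hβ.2; positivity, 1, fun N hN => ?_⟩
  obtain ⟨m, hm₁, hm₂⟩ := exists_two_pow_between (Nat.one_le_iff_ne_zero.1 hN)
  have hp := Ioc_subset_Icc_self (dyadicLevel_mem_Ioc m)
  refine ⟨dyadicLevel m, hp, ?_⟩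
  have hweight := mul_rpow_neg_le_geomWeight (x := 4 * N) hε (by exact_mod_cast hm₂)
  rw [mul_rpow (by norm_num) (Nat.cast_nonneg N)] at hweight
  have herr := one_sub_pow_mul_abs_sub_le_integral
    (fun q => mixedAVaR (geomWeight (2 ^ (-ε))) dyadicLevel (Ber q) id) hp N
  simp only [mixedAVaR_ber_zero hw dyadicLevel_mem_Ioc, sub_zero] at herr
  calc (1 - 2 ^ (-ε)) * 4 ^ (-ε) / 2 * (N : ℝ) ^ (-ε)
      = 1 / 2 * ((1 - 2 ^ (-ε)) * (4 ^ (-ε) * (N : ℝ) ^ (-ε))) := by ring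
    _ ≤ (1 - dyadicLevel m) ^ N * geomWeight (2 ^ (-ε)) m :=
        mul_le_mul (half_le_one_sub_dyadicLevel_pow hm₁) hweight
          (by have := hβ.2; positivity) (by linarith [half_le_one_sub_dyadicLevel_pow hm₁])
    _ ≤ _ := (mul_le_mul_of_nonneg_left
        ((le_mixedAVaR_ber (geomWeight_nonneg (Ico_subset_Icc_self hβ)) hw.summable
          dyadicLevel_mem_Ioc m).trans (le_abs_self _))
        (pow_nonneg (sub_nonneg.2 hp.2) N)).trans herr

end Dyadic

end RiskMeasure

open RiskMeasure

theorem no_rates_in_general_general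
    {Ω' : Type*} [MeasurableSpace Ω'] (P' : Measure Ω') [IsProbabilityMeasure P']
    (ε : ℝ) (hε : 0 < ε) :
    ∃ ρ : (Ω' → ℝ) → ℝ, ∃ ρm : Measure ℝ → ℝ,
      -- cash additivity and normalization:
      (∀ Y : Ω' → ℝ, Measurable Y → (∃ C, ∀ x, |Y x| ≤ C) →
        ∀ m : ℝ, ρ (fun x => Y x + m) = ρ Y + m) ∧
      ρ (fun _ => 0) = 0 ∧
      -- monotonicity:
      (∀ Y Z : Ω' → ℝ, Measurable Y → Measurable Z →
        (∃ C, ∀ x, |Y x| ≤ C) → (∃ C, ∀ x, |Z x| ≤ C) →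
        (∀ᵐ x ∂P', Y x ≤ Z x) → ρ Y ≤ ρ Z) ∧
      -- convexity:
      (∀ Y Z : Ω' → ℝ, Measurable Y → Measurable Z →
        (∃ C, ∀ x, |Y x| ≤ C) → (∃ C, ∀ x, |Z x| ≤ C) →
        ∀ t : ℝ, t ∈ Set.Icc (0:ℝ) 1 →
          ρ (fun x => t * Y x + (1 - t) * Z x) ≤ t * ρ Y + (1 - t) * ρ Z) ∧
      -- positive homogeneity (sublinearity):
      (∀ Y : Ω' → ℝ, Measurable Y → (∃ C, ∀ x, |Y x| ≤ C) →
        ∀ t : ℝ, 0 ≤ t → ρ (fun x => t * Y x) = t * ρ Y) ∧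
      -- law invariance:
      (∀ Y Z : Ω' → ℝ, Measurable Y → Measurable Z →
        (∃ C, ∀ x, |Y x| ≤ C) → (∃ C, ∀ x, |Z x| ≤ C) →
        Measure.map Y P' = Measure.map Z P' → ρ Y = ρ Z) ∧
      -- the Lebesgue property:
      (∀ (Y : Ω' → ℝ) (Yn : ℕ → Ω' → ℝ), Measurable Y → (∀ n, Measurable (Yn n)) →
        (∃ C, ∀ n x, |Yn n x| ≤ C) →
        (∀ᵐ x ∂P', Tendsto (fun n => Yn n x) atTop (nhds (Y x))) →
        Tendsto (fun n => ρ (Yn n)) atTop (nhds (ρ Y))) ∧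
      -- ρm is the factorization of ρ through laws:
      (∀ Y : Ω' → ℝ, Measurable Y → (∃ C, ∀ x, |Y x| ≤ C) →
        ρm (Measure.map Y P') = ρ Y) ∧
      -- the estimation error converges at a rate no better than N^{-ε}:
      (∃ c > 0, ∃ N₀ : ℕ, ∀ N : ℕ, N₀ ≤ N → ∃ p ∈ Set.Icc (0:ℝ) 1,
        c * (N : ℝ) ^ (-ε) ≤
          ∫ x, |ρm (Ber p) - ρm (Ber (pAvg N x))| ∂(Measure.pi fun _ : Fin N => Ber p)) := by
  have hβ := two_rpow_neg_mem_Ico hε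
  have hw0 := geomWeight_nonneg (Ico_subset_Icc_self hβ)
  have hw := hasSum_geomWeight hβ
  have hu := dyadicLevel_mem_Ioc
  refine ⟨mixedAVaR (geomWeight (2 ^ (-ε))) dyadicLevel P',
    fun ν => mixedAVaR (geomWeight (2 ^ (-ε))) dyadicLevel ν id,
    ?_, mixedAVaR_of_ae_eq_const hw hu (ae_of_all _ fun _ => rfl), ?_, ?_, ?_, ?_, ?_,
    fun Y hY _ => mixedAVaR_map hY.aemeasurable, exists_mul_rpow_le_estimation_error hε⟩
  · rintro Y hY ⟨C, hC⟩ m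
    exact mixedAVaR_add_const hw0 hw hu hY.aestronglyMeasurable (ae_of_all _ hC) m
  · rintro Y Z hY hZ ⟨C, hC⟩ ⟨D, hD⟩ hYZ
    exact mixedAVaR_mono hw0 hw.summable hu hY.aestronglyMeasurable hZ.aestronglyMeasurable
      (ae_of_all _ hC) (ae_of_all _ hD) hYZ
  · rintro Y Z hY hZ ⟨C, hC⟩ ⟨D, hD⟩ t ht
    exact mixedAVaR_convex hw0 hw.summable hu hY.aestronglyMeasurable hZ.aestronglyMeasurable
      (ae_of_all _ hC) (ae_of_all _ hD) ht
  · rintro Y hY ⟨C, hC⟩ t ht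
    exact mixedAVaR_const_mul hu (.of_bound hY.aestronglyMeasurable C (ae_of_all _ hC)) ht
  · rintro Y Z hY hZ - - hYZ
    rw [← mixedAVaR_map hY.aemeasurable, ← mixedAVaR_map hZ.aemeasurable, hYZ]
  · rintro Y Yn - hYn ⟨C, hC⟩ hlim
    exact tendsto_mixedAVaR_of_ae_tendsto hw0 hw.summable hu
      (fun n => (hYn n).aestronglyMeasurable) (fun n => ae_of_all _ (hC n)) hlim

/-- for every `ε > 0` there is a law invariant sublinear risk measure on
`L^∞(Ω',P')` with the Lebesgue property (given together with its factorization `ρm`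
through laws) whose empirical estimation error on Bernoulli models is at least
`c · N^{-ε}` for all large `N`. -/
theorem no_rates_in_general
    {Ω' : Type*} [MeasurableSpace Ω'] (P' : Measure Ω') [IsProbabilityMeasure P']
    -- (Ω', P') is atomless standard: every law on ℝ is realized:
    (hstd : ∀ ν : Measure ℝ, IsProbabilityMeasure ν →
      ∃ Y : Ω' → ℝ, Measurable Y ∧ Measure.map Y P' = ν)
    (ε : ℝ) (hε : 0 < ε) :
    ∃ ρ : (Ω' → ℝ) → ℝ, ∃ ρm : Measure ℝ → ℝ,
      -- cash additivity and normalization: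
      (∀ Y : Ω' → ℝ, Measurable Y → (∃ C, ∀ x, |Y x| ≤ C) →
        ∀ m : ℝ, ρ (fun x => Y x + m) = ρ Y + m) ∧
      ρ (fun _ => 0) = 0 ∧
      -- monotonicity:
      (∀ Y Z : Ω' → ℝ, Measurable Y → Measurable Z →
        (∃ C, ∀ x, |Y x| ≤ C) → (∃ C, ∀ x, |Z x| ≤ C) →
        (∀ᵐ x ∂P', Y x ≤ Z x) → ρ Y ≤ ρ Z) ∧
      -- convexity:
      (∀ Y Z : Ω' → ℝ, Measurable Y → Measurable Z →
        (∃ C, ∀ x, |Y x| ≤ C) → (∃ C, ∀ x, |Z x| ≤ C) →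
        ∀ t : ℝ, t ∈ Set.Icc (0:ℝ) 1 →
          ρ (fun x => t * Y x + (1 - t) * Z x) ≤ t * ρ Y + (1 - t) * ρ Z) ∧
      -- positive homogeneity (sublinearity):
      (∀ Y : Ω' → ℝ, Measurable Y → (∃ C, ∀ x, |Y x| ≤ C) →
        ∀ t : ℝ, 0 ≤ t → ρ (fun x => t * Y x) = t * ρ Y) ∧
      -- law invariance:
      (∀ Y Z : Ω' → ℝ, Measurable Y → Measurable Z →
        (∃ C, ∀ x, |Y x| ≤ C) → (∃ C, ∀ x, |Z x| ≤ C) →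
        Measure.map Y P' = Measure.map Z P' → ρ Y = ρ Z) ∧
      -- the Lebesgue property:
      (∀ (Y : Ω' → ℝ) (Yn : ℕ → Ω' → ℝ), Measurable Y → (∀ n, Measurable (Yn n)) →
        (∃ C, ∀ n x, |Yn n x| ≤ C) →
        (∀ᵐ x ∂P', Tendsto (fun n => Yn n x) atTop (nhds (Y x))) →
        Tendsto (fun n => ρ (Yn n)) atTop (nhds (ρ Y))) ∧
      -- ρm is the factorization of ρ through laws:
      (∀ Y : Ω' → ℝ, Measurable Y → (∃ C, ∀ x, |Y x| ≤ C) →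
        ρm (Measure.map Y P') = ρ Y) ∧
      -- the estimation error converges at a rate no better than N^{-ε}:
      (∃ c > 0, ∃ N₀ : ℕ, ∀ N : ℕ, N₀ ≤ N → ∃ p ∈ Set.Icc (0:ℝ) 1,
        c * (N : ℝ) ^ (-ε) ≤
          ∫ x, |ρm (Ber p) - ρm (Ber (pAvg N x))| ∂(Measure.pi fun _ : Fin N => Ber p)) :=
  no_rates_in_general_general P' ε hε
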